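/- The Bures–Wasserstein divergence W(Ω₁, Ω₂) = Tr(Ω₁ + Ω₂ − 2(Ω₂^{1/2} Ω₁ Ω₂^{1/2})^{1/2}) is nonnegative for all p×p symmetric positive semidefinite matrices Ω₁, Ω₂, and W(Ω₁, Ω₂) = 0 implies Ω₁ = Ω₂. -/

import Mathlib

open Matrix

section
open scoped ComplexOrder

/-- The positive semidefinite square root of a positive semidefinite matrix
(the definition Mathlib had in December 2024, since removed). -/
noncomputable def Matrix.PosSemidef.sqrt {n : Type*} [Fintype n] [DecidableEq n]
    {𝕜 : Type*} [RCLike 𝕜] {A : Matrix n n 𝕜} (hA : A.PosSemidef) : Matrix n n 𝕜 :=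
  hA.1.eigenvectorUnitary.1 * diagonal ((↑) ∘ (√·) ∘ hA.1.eigenvalues) *
  (star hA.1.eigenvectorUnitary : Matrix n n 𝕜)

theorem Matrix.PosSemidef.posSemidef_sqrt {n : Type*} [Fintype n] [DecidableEq n]
    {𝕜 : Type*} [RCLike 𝕜] {A : Matrix n n 𝕜} (hA : A.PosSemidef) : hA.sqrt.PosSemidef := by
  apply PosSemidef.mul_mul_conjTranspose_same
  refine posSemidef_diagonal_iff.mpr fun i ↦ ?_
  rw [Function.comp_apply, RCLike.nonneg_iff]
  constructor
  · simp only [Function.comp_apply, RCLike.ofReal_re]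
    exact Real.sqrt_nonneg _
  · simp only [Function.comp_apply, RCLike.ofReal_im]

theorem Matrix.PosSemidef.sqrt_mul_self {n : Type*} [Fintype n] [DecidableEq n]
    {𝕜 : Type*} [RCLike 𝕜] {A : Matrix n n 𝕜} (hA : A.PosSemidef) : hA.sqrt * hA.sqrt = A := by
  let C : Matrix n n 𝕜 := hA.1.eigenvectorUnitary
  let E := diagonal ((↑) ∘ (√·) ∘ hA.1.eigenvalues : n → 𝕜)
  suffices C * (E * (star C * C) * E) * star C = A by
    rw [Matrix.PosSemidef.sqrt]
    change C * E * star C * (C * E * star C) = A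
    simpa only [Matrix.mul_assoc] using this
  have : star C * C = 1 := by simp only [C, Unitary.coe_star_mul_self]
  rw [this, Matrix.mul_one]
  have : E * E = diagonal ((↑) ∘ hA.1.eigenvalues) := by
    rw [diagonal_mul_diagonal]
    congr! with v
    simp [← pow_two, ← RCLike.ofReal_pow, Real.sq_sqrt (hA.eigenvalues_nonneg v)]
  rw [this]
  conv_rhs => rw [hA.1.spectral_theorem, Unitary.conjStarAlgAut_apply]

end

open Filter Topology

set_option linter.unusedSectionVars false

section Aux

variable {n : Type*} [Fintype n] [DecidableEq n]

lemma trace_conjTranspose_mul_self (A : Matrix n n ℝ) :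
    (Aᴴ * A).trace = ∑ j, ∑ i, (A i j) ^ 2 := by
  simp [Matrix.trace, Matrix.mul_apply, Matrix.diag, sq]

lemma eq_zero_of_trace_conjTranspose_mul_self (A : Matrix n n ℝ)
    (h : (Aᴴ * A).trace = 0) : A = 0 := by
  rw [trace_conjTranspose_mul_self] at h
  ext i j
  have h1 : ∀ j ∈ Finset.univ, (0:ℝ) ≤ ∑ i, (A i j) ^ 2 :=
    fun j _ => Finset.sum_nonneg fun i _ => sq_nonneg _
  have h2 := (Finset.sum_eq_zero_iff_of_nonneg h1).mp h j (Finset.mem_univ _)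
  have h3 := (Finset.sum_eq_zero_iff_of_nonneg
    (fun i _ => sq_nonneg (A i j))).mp h2 i (Finset.mem_univ _)
  simpa using sq_eq_zero_iff.mp h3

lemma psd_diag_nonneg {M : Matrix n n ℝ} (hM : M.PosSemidef) (i : n) :
    0 ≤ M i i := by
  have := hM.dotProduct_mulVec_nonneg (Pi.single i 1)
  simpa [dotProduct, Matrix.mulVec_single, Pi.single_apply] using this

lemma psd_trace_nonneg {M : Matrix n n ℝ} (hM : M.PosSemidef) :
    0 ≤ M.trace :=
  Finset.sum_nonneg fun i _ => psd_diag_nonneg hM i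

lemma psd_eq_zero_of_trace_eq_zero {M : Matrix n n ℝ} (hM : M.PosSemidef)
    (h : M.trace = 0) : M = 0 := by
  have hs : M = hM.sqrtᴴ * hM.sqrt := by
    conv_lhs => rw [← hM.sqrt_mul_self]
    rw [hM.posSemidef_sqrt.isHermitian]
  have : hM.sqrt = 0 := eq_zero_of_trace_conjTranspose_mul_self _ (by rw [← hs, h])
  rw [hs, this]; simp

lemma psd_trace_mul_nonneg {X Y : Matrix n n ℝ} (hX : X.PosSemidef)
    (hY : Y.PosSemidef) : 0 ≤ (X * Y).trace := by
  have h : (X * Y).trace = (hX.sqrtᴴ * Y * hX.sqrt).trace := by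
    rw [hX.posSemidef_sqrt.isHermitian]
    conv_lhs => rw [← hX.sqrt_mul_self]
    rw [Matrix.mul_assoc, Matrix.trace_mul_comm]
  rw [h]
  exact psd_trace_nonneg (hY.conjTranspose_mul_mul_same _)

lemma psd_mul_eq_zero_of_trace_mul_eq_zero {X Y : Matrix n n ℝ} (hX : X.PosSemidef)
    (hY : Y.PosSemidef) (h : (X * Y).trace = 0) : X * Y = 0 := by
  set U := hY.sqrt * hX.sqrt with hU
  have hUU : Uᴴ * U = hX.sqrtᴴ * Y * hX.sqrt := by
    rw [hU, Matrix.conjTranspose_mul, hY.posSemidef_sqrt.isHermitian]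
    conv_rhs => rw [← hY.sqrt_mul_self]
    noncomm_ring
  have htr : (Uᴴ * U).trace = 0 := by
    rw [hUU, hX.posSemidef_sqrt.isHermitian, Matrix.trace_mul_comm,
      ← Matrix.mul_assoc, hX.sqrt_mul_self, h]
  have hU0 : U = 0 := eq_zero_of_trace_conjTranspose_mul_self _ htr
  have hUH : hX.sqrt * hY.sqrt = 0 := by
    have := congrArg Matrix.conjTranspose hU0
    rwa [hU, Matrix.conjTranspose_mul, hY.posSemidef_sqrt.isHermitian,
      hX.posSemidef_sqrt.isHermitian, Matrix.conjTranspose_zero] at this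
  calc X * Y = hX.sqrt * (hX.sqrt * hY.sqrt) * hY.sqrt := by
        conv_lhs => rw [← hX.sqrt_mul_self, ← hY.sqrt_mul_self]
        noncomm_ring
    _ = 0 := by rw [hUH]; simp

lemma psd_smul {M : Matrix n n ℝ} (hM : M.PosSemidef) {c : ℝ} (hc : 0 ≤ c) :
    (c • M).PosSemidef := by
  refine Matrix.PosSemidef.of_dotProduct_mulVec_nonneg ?_ (fun x => ?_)
  · unfold Matrix.IsHermitian
    rw [Matrix.conjTranspose_smul, hM.isHermitian]
    simp
  · rw [Matrix.smul_mulVec, dotProduct_smul]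
    exact mul_nonneg hc (by simpa using hM.dotProduct_mulVec_nonneg x)

lemma posdef_smul_one {c : ℝ} (hc : 0 < c) :
    ((c • 1 : Matrix n n ℝ)).PosDef := by
  refine Matrix.PosDef.of_dotProduct_mulVec_pos ?_ (fun x hx => ?_)
  · unfold Matrix.IsHermitian
    rw [Matrix.conjTranspose_smul, Matrix.conjTranspose_one]
    simp
  · rw [Matrix.smul_mulVec, Matrix.one_mulVec, dotProduct_smul]
    exact mul_pos hc (by simpa using Matrix.dotProduct_star_self_pos_iff.mpr hx)

lemma psd_of_tendsto {M : ℕ → Matrix n n ℝ} {L : Matrix n n ℝ}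
    (h : Tendsto M atTop (𝓝 L)) (hM : ∀ k, (M k).PosSemidef) : L.PosSemidef := by
  refine Matrix.PosSemidef.of_dotProduct_mulVec_nonneg ?_ ?_
  · have h1 : Tendsto (fun k => (M k)ᴴ) atTop (𝓝 Lᴴ) :=
      (Continuous.matrix_conjTranspose continuous_id).continuousAt.tendsto.comp h
    have h2 : (fun k => (M k)ᴴ) = M := funext fun k => (hM k).isHermitian
    rw [h2] at h1
    exact tendsto_nhds_unique h1 h
  · intro x
    have hc : Continuous fun A : Matrix n n ℝ => star x ⬝ᵥ A *ᵥ x :=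
      (continuous_const).dotProduct ((continuous_id).matrix_mulVec continuous_const)
    exact ge_of_tendsto ((hc.continuousAt.tendsto).comp h)
      (Filter.Eventually.of_forall fun k => (hM k).dotProduct_mulVec_nonneg x)

lemma contraction_identity (S B Q : Matrix n n ℝ) (hS : S.IsHermitian) (hB : B.IsHermitian) :
    ((S - B * Qᴴ)ᴴ * (S - B * Qᴴ)).trace + ((B * B) * (1 - Qᴴ * Q)).trace
      = (S * S).trace + (B * B).trace - 2 * ((Qᴴ * (S * B)).trace) := by
  have e1 : (S - B * Qᴴ)ᴴ = S - Q * B := by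
    rw [Matrix.conjTranspose_sub, Matrix.conjTranspose_mul,
      Matrix.conjTranspose_conjTranspose, hS, hB]
  have t1 : (S * (B * Qᴴ)).trace = (Qᴴ * (S * B)).trace := by
    rw [Matrix.trace_mul_comm Qᴴ (S * B), Matrix.mul_assoc]
  have t2 : ((Q * B) * S).trace = (Qᴴ * (S * B)).trace := by
    have e : (Q * B * S)ᴴ = S * (B * Qᴴ) := by
      rw [Matrix.conjTranspose_mul, Matrix.conjTranspose_mul, hS, hB]
    have h := Matrix.trace_conjTranspose (Q * B * S)
    rw [e] at h
    rw [← t1, h]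
    simp
  have t3 : ((Q * B) * (B * Qᴴ)).trace = ((B * B) * (Qᴴ * Q)).trace := by
    rw [Matrix.mul_assoc Q B (B * Qᴴ), ← Matrix.mul_assoc B B Qᴴ,
      Matrix.trace_mul_comm, Matrix.mul_assoc]
  have expand1 : (S - Q * B) * (S - B * Qᴴ)
      = S * S - S * (B * Qᴴ) - ((Q * B) * S - (Q * B) * (B * Qᴴ)) := by noncomm_ring
  have expand2 : (B * B) * (1 - Qᴴ * Q) = B * B - (B * B) * (Qᴴ * Q) := by noncomm_ring
  rw [e1, expand1, expand2, Matrix.trace_sub, Matrix.trace_sub, Matrix.trace_sub,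
    Matrix.trace_sub, t1, t2, t3]
  ring

lemma contraction_ineq {S B Q : Matrix n n ℝ} (hS : S.IsHermitian) (hB : B.IsHermitian)
    (hBB : (B * B).PosSemidef) (hQ : (1 - Qᴴ * Q).PosSemidef) :
    2 * ((Qᴴ * (S * B)).trace) ≤ (S * S).trace + (B * B).trace := by
  have h := contraction_identity S B Q hS hB
  have h1 : 0 ≤ ((S - B * Qᴴ)ᴴ * (S - B * Qᴴ)).trace :=
    psd_trace_nonneg (Matrix.posSemidef_conjTranspose_mul_self _)
  have h2 : 0 ≤ ((B * B) * (1 - Qᴴ * Q)).trace := psd_trace_mul_nonneg hBB hQ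
  linarith

lemma eps_approx (P C : Matrix n n ℝ) (hP : P.PosSemidef)
    (hCC : Cᴴ * C = P * P) {ε : ℝ} (hε : 0 < ε) :
    ∃ Q : Matrix n n ℝ, (1 - Qᴴ * Q).PosSemidef ∧
      P.trace - ε * (Fintype.card n) ≤ (Qᴴ * C).trace := by
  set Pe : Matrix n n ℝ := P + ε • 1 with hPe_def
  have hPe : Pe.PosDef := Matrix.PosDef.posSemidef_add hP (posdef_smul_one hε)
  set N : Matrix n n ℝ := Pe⁻¹ with hN_def
  have hdet : IsUnit Pe.det := (Matrix.isUnit_iff_isUnit_det _).mp hPe.isUnit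
  have hNP : N * Pe = 1 := Matrix.nonsing_inv_mul _ hdet
  have hPN : Pe * N = 1 := Matrix.mul_nonsing_inv _ hdet
  have hNherm : Nᴴ = N := hPe.isHermitian.inv
  have hNpsd : N.PosSemidef := hPe.inv.posSemidef
  clear_value N Pe
  refine ⟨C * N, ?_, ?_⟩
  · have hQH : (C * N)ᴴ = N * Cᴴ := by rw [Matrix.conjTranspose_mul, hNherm]
    have hQQ : (C * N)ᴴ * (C * N) = N * (P * P) * N := by
      have h : (C * N)ᴴ * (C * N) = N * (Cᴴ * C) * N := by rw [hQH]; noncomm_ring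
      rw [h, hCC]
    set D : Matrix n n ℝ := ε • P + (ε • P + (ε * ε) • (1 : Matrix n n ℝ)) with hD_def
    have hD : D.PosSemidef :=
      (psd_smul hP hε.le).add ((psd_smul hP hε.le).add
        (psd_smul Matrix.PosSemidef.one (mul_pos hε hε).le))
    have hsub : Pe * Pe - P * P = D := by
      rw [hPe_def, hD_def]
      simp only [add_mul, mul_add, smul_mul_assoc, mul_smul_comm, one_mul, mul_one,
        smul_smul, smul_add]
      abel
    have hone : N * (Pe * Pe) * N = 1 := by
      have : N * (Pe * Pe) * N = (N * Pe) * (Pe * N) := by noncomm_ring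
      rw [this, hNP, hPN, one_mul]
    have key : 1 - (C * N)ᴴ * (C * N) = N * D * N := by
      rw [hQQ, ← hone, ← hsub, Matrix.mul_sub, Matrix.sub_mul]
    rw [key]
    have hres := hD.mul_mul_conjTranspose_same N
    rwa [hNherm] at hres
  · have hQC : (C * N)ᴴ * C = N * (P * P) := by
      rw [Matrix.conjTranspose_mul, hNherm, Matrix.mul_assoc, hCC]
    have key1 : P - N * (P * P) = ε • (N * P) := by
      have h1 : P = N * (Pe * P) := by rw [← Matrix.mul_assoc, hNP, one_mul]
      have h2 : Pe - P = ε • (1 : Matrix n n ℝ) := by rw [hPe_def]; abel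
      calc P - N * (P * P) = N * (Pe * P) - N * (P * P) := by rw [← h1]
        _ = N * ((Pe - P) * P) := by noncomm_ring
        _ = ε • (N * P) := by rw [h2, smul_mul_assoc, one_mul, mul_smul_comm]
    have key2 : N * P = 1 - ε • N := by
      have h3 : P = Pe - ε • 1 := by rw [hPe_def]; abel
      rw [h3, Matrix.mul_sub, hNP, mul_smul_comm, mul_one]
    have htrN : 0 ≤ N.trace := psd_trace_nonneg hNpsd
    have e1 : P.trace - (N * (P * P)).trace = ε * (N * P).trace := by
      rw [← Matrix.trace_sub, key1, Matrix.trace_smul, smul_eq_mul]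
    have e2 : (N * P).trace = (Fintype.card n : ℝ) - ε * N.trace := by
      rw [key2, Matrix.trace_sub, Matrix.trace_one, Matrix.trace_smul, smul_eq_mul]
    rw [hQC]
    have hεε : 0 ≤ ε * (ε * N.trace) := mul_nonneg hε.le (mul_nonneg hε.le htrN)
    nlinarith [e1, e2]

lemma entries_bound {Q : Matrix n n ℝ} (h : (1 - Qᴴ * Q).PosSemidef) (i j : n) :
    |Q i j| ≤ 1 := by
  have hd := psd_diag_nonneg h j
  have hQQ : (Qᴴ * Q) j j = ∑ k, (Q k j) ^ 2 := by
    simp [Matrix.mul_apply, sq]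
  have hle : (Q i j) ^ 2 ≤ ∑ k, (Q k j) ^ 2 :=
    Finset.single_le_sum (fun k _ => sq_nonneg (Q k j)) (Finset.mem_univ i)
  have h1 : (1 - Qᴴ * Q) j j = 1 - (Qᴴ * Q) j j := by
    simp [Matrix.sub_apply, Matrix.one_apply_eq]
  rw [h1, hQQ] at hd
  have : (Q i j) ^ 2 ≤ 1 := by linarith
  nlinarith [abs_nonneg (Q i j), sq_abs (Q i j)]

end Aux

/-- The Bures–Wasserstein divergence
`W(Ω₁, Ω₂) = Tr(Ω₁ + Ω₂ − 2 (Ω₂^{1/2} Ω₁ Ω₂^{1/2})^{1/2})` between positive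
semidefinite matrices, using the unique positive semidefinite square roots. -/
noncomputable def buresW {p : ℕ} {Ω₁ Ω₂ : Matrix (Fin p) (Fin p) ℝ}
    (h₁ : Ω₁.PosSemidef) (h₂ : Ω₂.PosSemidef) : ℝ :=
  (Ω₁ + Ω₂ - (2 : ℝ) • (h₁.mul_mul_conjTranspose_same h₂.sqrt).sqrt).trace

attribute [local instance] Matrix.normedAddCommGroup Matrix.normedSpace

/-- The Bures–Wasserstein divergence is nonnegative, and it vanishes
only if the two matrices coincide. -/
theorem buresW_nonneg_and_indiscernible {p : ℕ} {Ω₁ Ω₂ : Matrix (Fin p) (Fin p) ℝ}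
    (h₁ : Ω₁.PosSemidef) (h₂ : Ω₂.PosSemidef) :
    0 ≤ buresW h₁ h₂ ∧ (buresW h₁ h₂ = 0 → Ω₁ = Ω₂) := by
  have hW : buresW h₁ h₂ = Ω₁.trace + Ω₂.trace
      - 2 * ((h₁.mul_mul_conjTranspose_same h₂.sqrt).sqrt).trace := by
    unfold buresW
    rw [Matrix.trace_sub, Matrix.trace_add, Matrix.trace_smul, smul_eq_mul]
  have hS : (h₁.sqrt).PosSemidef := h₁.posSemidef_sqrt
  have hB : (h₂.sqrt).PosSemidef := h₂.posSemidef_sqrt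
  set S := h₁.sqrt with hS_def
  set B := h₂.sqrt with hB_def
  have hSH : Sᴴ = S := hS.isHermitian
  have hBH : Bᴴ = B := hB.isHermitian
  have hSS : S * S = Ω₁ := h₁.sqrt_mul_self
  have hBB : B * B = Ω₂ := h₂.sqrt_mul_self
  set P := (h₁.mul_mul_conjTranspose_same h₂.sqrt).sqrt with hP_def
  have hPsd : P.PosSemidef := Matrix.PosSemidef.posSemidef_sqrt _
  have hPP : P * P = B * Ω₁ * Bᴴ := Matrix.PosSemidef.sqrt_mul_self _
  set C := S * B with hC_def
  have hCC : Cᴴ * C = P * P := by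
    rw [hPP, hBH, hC_def, Matrix.conjTranspose_mul, hSH, hBH, ← hSS]
    noncomm_ring
  have hcard : ((Fintype.card (Fin p)) : ℝ) = p := by simp
  have key : ∀ ε : ℝ, 0 < ε → -(2 * ε * p) ≤ buresW h₁ h₂ := by
    intro ε hε
    obtain ⟨Q, hQ, htr⟩ := eps_approx P C hPsd hCC hε
    have hc := contraction_ineq hS.isHermitian hB.isHermitian
      (show (B * B).PosSemidef by rw [hBB]; exact h₂) hQ
    rw [hSS, hBB] at hc
    rw [hcard] at htr
    rw [hW]
    linarith
  constructor
  · by_contra hneg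
    push_neg at hneg
    have hδ : 0 < -(buresW h₁ h₂) / (2 * p + 1) :=
      div_pos (by linarith) (by positivity)
    have h1 := key _ hδ
    have hp0 : (0:ℝ) ≤ (p:ℝ) := Nat.cast_nonneg p
    have hne : (2 * (p:ℝ) + 1) ≠ 0 := by positivity
    have h2 := mul_le_mul_of_nonneg_right h1 (show (0:ℝ) ≤ 2 * p + 1 by positivity)
    have h3 : -(buresW h₁ h₂) / (2 * p + 1) * (2 * p + 1) = -(buresW h₁ h₂) :=
      div_mul_cancel₀ _ hne
    nlinarith [h2, h3]
  · intro h0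
    have he : ∀ n : ℕ, (0:ℝ) < 1 / (n + 1) := fun n => by positivity
    choose Qs hcon htr using fun n => eps_approx P C hPsd hCC (he n)
    have hWtr : Ω₁.trace + Ω₂.trace = 2 * P.trace := by rw [hW] at h0; linarith
    have hFG : ∀ n : ℕ, ((S - B * (Qs n)ᴴ)ᴴ * (S - B * (Qs n)ᴴ)).trace
        + (Ω₂ * (1 - (Qs n)ᴴ * Qs n)).trace ≤ 2 * (1/((n:ℝ)+1)) * p := by
      intro n
      have hid := contraction_identity S B (Qs n) hS.isHermitian hB.isHermitian
      rw [hSS, hBB] at hid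
      have h2 := htr n
      rw [hcard] at h2
      linarith
    have hF0 : ∀ n : ℕ, 0 ≤ ((S - B * (Qs n)ᴴ)ᴴ * (S - B * (Qs n)ᴴ)).trace :=
      fun n => psd_trace_nonneg (Matrix.posSemidef_conjTranspose_mul_self _)
    have hG0 : ∀ n : ℕ, 0 ≤ (Ω₂ * (1 - (Qs n)ᴴ * Qs n)).trace :=
      fun n => psd_trace_mul_nonneg h₂ (hcon n)
    have hmem : ∀ n, Qs n ∈ Metric.closedBall (0 : Matrix (Fin p) (Fin p) ℝ) 1 := by
      intro n
      rw [Metric.mem_closedBall, dist_zero_right, Matrix.norm_le_iff zero_le_one]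
      intro i j
      simpa [Real.norm_eq_abs] using entries_bound (hcon n) i j
    obtain ⟨Q, -, φ, hφ, hlim⟩ :=
      tendsto_subseq_of_bounded Metric.isBounded_closedBall hmem
    have hseq0 : Tendsto (fun k : ℕ => 2 * (1/((φ k : ℝ)+1)) * p) atTop (𝓝 0) := by
      have h1 : Tendsto (fun n : ℕ => 1/((n:ℝ)+1)) atTop (𝓝 0) :=
        tendsto_one_div_add_atTop_nhds_zero_nat
      have h2 := h1.comp (hφ.tendsto_atTop)
      have h3 := (h2.const_mul (2:ℝ)).mul_const (p:ℝ)
      simpa using h3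
    have hsubc : Continuous (fun M : Matrix (Fin p) (Fin p) ℝ => S - B * Mᴴ) :=
      continuous_const.sub (continuous_const.matrix_mul continuous_id.matrix_conjTranspose)
    have hFc : Continuous (fun M : Matrix (Fin p) (Fin p) ℝ =>
        ((S - B * Mᴴ)ᴴ * (S - B * Mᴴ)).trace) :=
      (hsubc.matrix_conjTranspose.matrix_mul hsubc).matrix_trace
    have hGc : Continuous (fun M : Matrix (Fin p) (Fin p) ℝ =>
        (Ω₂ * (1 - Mᴴ * M)).trace) :=
      (continuous_const.matrix_mul (continuous_const.sub
        (continuous_id.matrix_conjTranspose.matrix_mul continuous_id))).matrix_trace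
    have hXc : Continuous (fun M : Matrix (Fin p) (Fin p) ℝ => 1 - Mᴴ * M) :=
      continuous_const.sub (continuous_id.matrix_conjTranspose.matrix_mul continuous_id)
    have hFQ : ((S - B * Qᴴ)ᴴ * (S - B * Qᴴ)).trace = 0 := by
      refine tendsto_nhds_unique (hFc.continuousAt.tendsto.comp hlim) ?_
      refine squeeze_zero (fun k => hF0 (φ k)) (fun k => ?_) hseq0
      have := hFG (φ k)
      have := hG0 (φ k)
      simp only [Function.comp_apply]
      linarith
    have hGQ : (Ω₂ * (1 - Qᴴ * Q)).trace = 0 := by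
      refine tendsto_nhds_unique (hGc.continuousAt.tendsto.comp hlim) ?_
      refine squeeze_zero (fun k => hG0 (φ k)) (fun k => ?_) hseq0
      have := hFG (φ k)
      have := hF0 (φ k)
      simp only [Function.comp_apply]
      linarith
    have hQpsd : (1 - Qᴴ * Q).PosSemidef :=
      psd_of_tendsto (hXc.continuousAt.tendsto.comp hlim) (fun k => hcon (φ k))
    have hSBQ : S = B * Qᴴ := by
      have hM0 : (S - B * Qᴴ)ᴴ * (S - B * Qᴴ) = 0 :=
        psd_eq_zero_of_trace_eq_zero (Matrix.posSemidef_conjTranspose_mul_self _) hFQ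
      have := Matrix.conjTranspose_mul_self_eq_zero.mp hM0
      exact (sub_eq_zero.mp this)
    have hO2 : Ω₂ * (1 - Qᴴ * Q) = 0 :=
      psd_mul_eq_zero_of_trace_mul_eq_zero h₂ hQpsd hGQ
    have h3 : B * (1 - Qᴴ * Q) * Bᴴ = 0 := by
      apply psd_eq_zero_of_trace_eq_zero (hQpsd.mul_mul_conjTranspose_same B)
      rw [Matrix.trace_mul_comm, ← Matrix.mul_assoc, hBH, hBB, hO2, Matrix.trace_zero]
    have h4 : B * (Qᴴ * Q) * B = Ω₂ := by
      have hexp : B * (1 - Qᴴ * Q) * Bᴴ = B * Bᴴ - B * (Qᴴ * Q) * Bᴴ := by noncomm_ring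
      rw [hexp, hBH, hBB] at h3
      exact (sub_eq_zero.mp h3).symm
    calc Ω₁ = S * S := hSS.symm
      _ = S * Sᴴ := by rw [hSH]
      _ = (B * Qᴴ) * (B * Qᴴ)ᴴ := by rw [← hSBQ]
      _ = B * (Qᴴ * Q) * B := by
          rw [Matrix.conjTranspose_mul, Matrix.conjTranspose_conjTranspose, hBH]
          noncomm_ring
      _ = Ω₂ := h4
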